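/- Every triangle-free graph Γ on n vertices has at most 2^{n/2} maximal independent sets. -/

import Mathlib

/-!
Let `v` be a vertex of minimum degree `d` with neighbours `u₀, …, u_{d-1}`. A maximal
independent set `S` either contains `v`, or contains a first `uᵢ`; in the latter case `S`
meets `N[uᵢ] ∪ {u₀, …, u_{i-1}}` exactly in `uᵢ`. If a maximal independent set meets a set
`A ⊇ N(x)` exactly in `x`, it is determined by its trace on `V ∖ A`, which is a maximal
independent set of `Γ - A`. Since `N(v)` is independent in a triangle-free graph, the `i`-th
set has at least `d + 1 + i` vertices, so by induction the number of maximal independent sets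
is at most `√2 ^ n · (2^{-(d+1)/2} + ∑_{i<d} 2^{-(d+1+i)/2}) ≤ √2 ^ n`.
-/

/-- The collection of maximal independent sets of a simple graph. -/
def maxIndepSets {V : Type*} (Γ : SimpleGraph V) : Set (Set V) :=
  {I | (∀ x ∈ I, ∀ y ∈ I, ¬ Γ.Adj x y) ∧
    ∀ J : Set V, (∀ x ∈ J, ∀ y ∈ J, ¬ Γ.Adj x y) → I ⊆ J → I = J}

open Finset

section

variable {V : Type*} {Γ : SimpleGraph V}

theorem mem_maxIndepSets_iff {S : Set V} :
    S ∈ maxIndepSets Γ ↔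
      (∀ x ∈ S, ∀ y ∈ S, ¬ Γ.Adj x y) ∧ ∀ x ∉ S, ∃ y ∈ S, Γ.Adj x y := by
  refine ⟨fun ⟨hind, hmax⟩ => ⟨hind, fun x hx => ?_⟩, fun ⟨hind, hdom⟩ => ⟨hind, ?_⟩⟩
  · by_contra! hno
    have hins : ∀ a ∈ insert x S, ∀ b ∈ insert x S, ¬ Γ.Adj a b := by
      rintro a (rfl | ha) b (rfl | hb)
      · exact Γ.irrefl
      · exact hno b hb
      · exact fun h => hno a ha h.symm
      · exact hind a ha b hb
    exact hx ((hmax _ hins (Set.subset_insert x S)).symm ▸ Set.mem_insert x S)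
  · refine fun J hJ hSJ => hSJ.antisymm fun y hy => ?_
    by_contra hyS
    obtain ⟨z, hz, hadj⟩ := hdom y hyS
    exact hJ y hy z (hSJ hz) hadj

theorem ncard_maxIndepSets_inter_eq_singleton_le [Finite V] {A : Set V} {x : V}
    (hA : Γ.neighborSet x ⊆ A) :
    {S ∈ maxIndepSets Γ | S ∩ A = {x}}.ncard ≤ (maxIndepSets (Γ.induce Aᶜ)).ncard := by
  refine Set.ncard_le_ncard_of_injOn (fun S => Subtype.val ⁻¹' S) ?_ ?_
  · rintro S ⟨hS, hSA⟩
    rw [mem_maxIndepSets_iff] at hS ⊢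
    refine ⟨fun a ha b hb => hS.1 a ha b hb, fun ⟨y, hy⟩ hyS => ?_⟩
    obtain ⟨z, hzS, hyz⟩ := hS.2 y hyS
    have hzA : z ∉ A := by
      intro hzA
      have hzx : z ∈ S ∩ A := ⟨hzS, hzA⟩
      rw [hSA, Set.mem_singleton_iff] at hzx
      exact hy (hA (hzx ▸ hyz.symm))
    exact ⟨⟨z, hzA⟩, hzS, hyz⟩
  · rintro S ⟨-, hSA⟩ T ⟨-, hTA⟩ hST
    ext y
    by_cases hy : y ∈ A
    · have hS := Set.ext_iff.mp hSA y
      have hT := Set.ext_iff.mp hTA y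
      simp only [Set.mem_inter_iff, hy, and_true] at hS hT
      rw [hS, hT]
    · exact Set.ext_iff.mp hST ⟨y, hy⟩

theorem inter_insert_neighborSet_eq_singleton {S : Set V} {x : V}
    (hS : ∀ a ∈ S, ∀ b ∈ S, ¬ Γ.Adj a b) (hx : x ∈ S) :
    S ∩ insert x (Γ.neighborSet x) = {x} := by
  refine Set.eq_singleton_iff_unique_mem.mpr ⟨⟨hx, Set.mem_insert x _⟩, ?_⟩
  rintro y ⟨hy, rfl | hxy⟩
  · rfl
  · exact absurd hxy (hS x hx y hy)

theorem inter_insert_neighborSet_union_eq_singleton {S B : Set V} {x : V}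
    (hS : ∀ a ∈ S, ∀ b ∈ S, ¬ Γ.Adj a b) (hx : x ∈ S) (hB : Disjoint S B) :
    S ∩ (insert x (Γ.neighborSet x) ∪ B) = {x} := by
  rw [Set.inter_union_distrib_left, hB.inter_eq, Set.union_empty,
    inter_insert_neighborSet_eq_singleton hS hx]

theorem maxIndepSets_subset_union {d : ℕ} {v : V} {u : Fin d → V}
    (hu : Γ.neighborSet v ⊆ Set.range u) :
    maxIndepSets Γ ⊆ {S ∈ maxIndepSets Γ | S ∩ insert v (Γ.neighborSet v) = {v}} ∪
      ⋃ i, {S ∈ maxIndepSets Γ |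
        S ∩ (insert (u i) (Γ.neighborSet (u i)) ∪ u '' Set.Iio i) = {u i}} := by
  intro S hS
  have hind := (mem_maxIndepSets_iff.mp hS).1
  by_cases hv : v ∈ S
  · exact Or.inl ⟨hS, inter_insert_neighborSet_eq_singleton hind hv⟩
  · obtain ⟨y, hyS, hvy⟩ := (mem_maxIndepSets_iff.mp hS).2 v hv
    obtain ⟨j, rfl⟩ := hu hvy
    obtain ⟨i, hi, hmin⟩ := wellFounded_lt.has_min {i | u i ∈ S} ⟨j, hyS⟩
    refine Or.inr (Set.mem_iUnion.mpr ⟨i, hS,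
      inter_insert_neighborSet_union_eq_singleton hind hi ?_⟩)
    rw [Set.disjoint_right]
    rintro _ ⟨k, hk, rfl⟩ hkS
    exact hmin k hkS hk

theorem ncard_insert_neighborSet_union_image_Iio [Finite V] {d : ℕ} {u : Fin d → V}
    (hinj : Function.Injective u) (hu : Γ.IsIndepSet (Set.range u)) (i : Fin d) :
    (insert (u i) (Γ.neighborSet (u i)) ∪ u '' Set.Iio i).ncard =
      (Γ.neighborSet (u i)).ncard + 1 + i := by
  have hdisj : Disjoint (insert (u i) (Γ.neighborSet (u i))) (u '' Set.Iio i) := by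
    rw [Set.disjoint_right]
    rintro _ ⟨j, hj, rfl⟩ (hji | hadj)
    · exact hj.ne (hinj hji)
    · exact hu (Set.mem_range_self i) (Set.mem_range_self j) (hinj.ne hj.ne') hadj
  rw [Set.ncard_union_eq hdisj, Set.ncard_insert_of_notMem Γ.notMem_neighborSet_self,
    Set.ncard_image_of_injective _ hinj, ← Finset.coe_Iio, Set.ncard_coe_finset, Fin.card_Iio]

end

theorem inv_sqrt_two_pow_add_sum_le_one (d : ℕ) :
    (√2)⁻¹ ^ (d + 1) + ∑ i ∈ range d, (√2)⁻¹ ^ (d + 1 + i) ≤ 1 := by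
  set s : ℝ := (√2)⁻¹
  have hs0 : 0 ≤ s := by positivity
  have hs2 : s ^ 2 = 1 / 2 := by rw [inv_pow, Real.sq_sqrt zero_le_two, one_div]
  have hs1 : s ≤ 3 / 4 := by nlinarith
  induction d with
  | zero => simpa using hs1.trans (by norm_num)
  | succ d ih =>
    have hrec : s ^ (d + 1 + 1) + ∑ i ∈ range (d + 1), s ^ (d + 1 + 1 + i) =
        s * (s ^ (d + 1) + ∑ i ∈ range d, s ^ (d + 1 + i)) + s ^ (2 * d + 2) := by
      rw [sum_range_succ, mul_add, mul_sum]
      rw [sum_congr rfl fun i _ => (by ring : s ^ (d + 1 + 1 + i) = s * s ^ (d + 1 + i))]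
      ring
    rw [hrec]
    rcases d.eq_zero_or_pos with rfl | hd
    · norm_num
      nlinarith
    · have hs4 : s ^ (2 * d + 2) ≤ s ^ 4 := pow_le_pow_of_le_one hs0 (by linarith) (by omega)
      have : s ^ 4 = 1 / 4 := by rw [show s ^ 4 = (s ^ 2) ^ 2 by ring, hs2]; norm_num
      nlinarith [mul_le_mul_of_nonneg_left ih hs0]

section

variable {V : Type*} [Finite V] {Γ : SimpleGraph V}

theorem ncard_maxIndepSets_le_of_induce_compl [Nonempty V] (hΓ : Γ.CliqueFree 3)
    (ih : ∀ A : Set V, A.Nonempty →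
      ((maxIndepSets (Γ.induce Aᶜ)).ncard : ℝ) ≤ √2 ^ Nat.card V * (√2)⁻¹ ^ A.ncard) :
    ((maxIndepSets Γ).ncard : ℝ) ≤ √2 ^ Nat.card V := by
  set r : ℝ := √2 ^ Nat.card V
  set s : ℝ := (√2)⁻¹
  have hclass : ∀ (x : V) (A : Set V) (k : ℕ), x ∈ A → Γ.neighborSet x ⊆ A → k ≤ A.ncard →
      ({S ∈ maxIndepSets Γ | S ∩ A = {x}}.ncard : ℝ) ≤ r * s ^ k := fun x A k hx hA hk =>
    calc _ ≤ ((maxIndepSets (Γ.induce Aᶜ)).ncard : ℝ) :=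
          Nat.cast_le.mpr (ncard_maxIndepSets_inter_eq_singleton_le hA)
      _ ≤ r * s ^ A.ncard := ih A ⟨x, hx⟩
      _ ≤ r * s ^ k := mul_le_mul_of_nonneg_left (pow_le_pow_of_le_one (by positivity)
          (inv_le_one_of_one_le₀ Real.one_lt_sqrt_two.le) hk) (by positivity)
  obtain ⟨v, hv⟩ := Finite.exists_min fun w => (Γ.neighborSet w).ncard
  set d := (Γ.neighborSet v).ncard
  let e : Fin d ≃ Γ.neighborSet v := (Finite.equivFin (Γ.neighborSet v)).symm
  let u : Fin d → V := fun i => e i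
  have hinj : Function.Injective u := Subtype.val_injective.comp e.injective
  have hrange : Set.range u = Γ.neighborSet v := by
    simp only [u, Set.range_comp' Subtype.val e, e.range_eq_univ, Set.image_univ,
      Subtype.range_coe]
  have hindep : Γ.IsIndepSet (Set.range u) :=
    hrange ▸ Γ.isIndepSet_neighborSet_of_triangleFree hΓ v
  have hcount := (Set.ncard_le_ncard (maxIndepSets_subset_union hrange.ge)).trans
    ((Set.ncard_union_le _ _).trans (Nat.add_le_add_left (Set.ncard_iUnion_le_of_fintype _) _))
  calc ((maxIndepSets Γ).ncard : ℝ)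
      ≤ r * s ^ (d + 1) + ∑ i : Fin d, r * s ^ (d + 1 + i) := by
        refine (Nat.cast_le.mpr hcount).trans ?_
        push_cast
        gcongr with i
        · exact hclass v _ _ (Set.mem_insert v _) (Set.subset_insert v _)
            (Set.ncard_insert_of_notMem Γ.notMem_neighborSet_self).ge
        · refine hclass (u i) _ _ (.inl (Set.mem_insert _ _)) (fun y hy => .inl (.inr hy)) ?_
          rw [ncard_insert_neighborSet_union_image_Iio hinj hindep i]
          have := hv (u i)
          omega
    _ = r * (s ^ (d + 1) + ∑ i ∈ range d, s ^ (d + 1 + i)) := by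
        rw [Fin.sum_univ_eq_sum_range (fun i => r * s ^ (d + 1 + i)), ← mul_sum, mul_add]
    _ ≤ r := mul_le_of_le_one_right (by positivity) (inv_sqrt_two_pow_add_sum_le_one d)

theorem ncard_maxIndepSets_le_sqrt_two_pow (hΓ : Γ.CliqueFree 3) :
    ((maxIndepSets Γ).ncard : ℝ) ≤ √2 ^ Nat.card V := by
  induction hn : Nat.card V using Nat.strong_induction_on generalizing V with
  | _ n ih =>
  subst hn
  rcases isEmpty_or_nonempty V with hV | hV
  · simpa using Set.ncard_le_one_of_subsingleton (maxIndepSets Γ)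
  refine ncard_maxIndepSets_le_of_induce_compl hΓ fun A hA => ?_
  have hcard : Nat.card ↥Aᶜ + A.ncard = Nat.card V := by
    rw [Nat.card_coe_set_eq, add_comm, Set.ncard_add_ncard_compl]
  have hlt : Nat.card ↥Aᶜ < Nat.card V := by
    have := (Set.ncard_pos (Set.toFinite A)).mpr hA
    omega
  calc ((maxIndepSets (Γ.induce Aᶜ)).ncard : ℝ)
      ≤ √2 ^ Nat.card ↥Aᶜ :=
        ih _ hlt (hΓ.comap (SimpleGraph.Embedding.induce Aᶜ).isContained) rfl
    _ = √2 ^ Nat.card V * (√2)⁻¹ ^ A.ncard := by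
        rw [← hcard, pow_add, mul_assoc, ← mul_pow, mul_inv_cancel₀ (by positivity), one_pow,
          mul_one]

end

/-- Hujter–Tuza: every triangle-free graph on `n` vertices has at
most `2^{n/2}` maximal independent sets. -/
theorem stmt7 (V : Type*) [Finite V] (Γ : SimpleGraph V) (hΓ : Γ.CliqueFree 3) :
    ((maxIndepSets Γ).ncard : ℝ) ≤ (2 : ℝ) ^ ((Nat.card V : ℝ) / 2) := by
  have hpow : (2 : ℝ) ^ ((Nat.card V : ℝ) / 2) = √2 ^ Nat.card V := by
    rw [div_eq_inv_mul, ← one_div, Real.rpow_mul zero_le_two, Real.rpow_natCast,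
      ← Real.sqrt_eq_rpow]
  rw [hpow]
  exact ncard_maxIndepSets_le_sqrt_two_pow hΓ
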